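/- arXiv:2307.14573 — 2 statements merged into one kernel-verified Lean document; each statement's English description precedes it below -/
import Mathlib

section
/- Let A be a unital associative ℂ-algebra, X an n×n symmetric matrix over A whose entries pairwise commute, Y an n×m matrix over A, and H an n×m matrix over A such that [X_{ij}, Y_{kl}] = −(δ_{ik} H_{jl} + δ_{jk} H_{il}) for all 1 ≤ i,j,k ≤ n, 1 ≤ l ≤ m, and every entry of X commutes with every entry of H (automatic when n ≥ 4). Then for every r, A_r · (X_1Y_1 + (r−1)H_1)(X_2Y_2 + (r−2)H_2) ⋯ (X_{r−1}Y_{r−1} + H_{r−1})(X_rY_r) = A_r · X_1⋯X_r Y_1⋯Y_r as A-linear operators (ℂ^m)^{⊗r} → (ℂ^n)^{⊗r}. -/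
/-!
Interpolate between the two sides with `stage p`, the operator in which the first `p` factors
have already been merged into `F_t = X_t Y_t + (r - 1 - t) H_t`. To pass from `stage p` to
`stage (p + 1)`, move `Y_p` to the left past `X_{r-1}, …, X_{p+1}`. Each exchange with `X_q`
produces two `H`-terms. The one coming from `δ_{ik}` contains `X_{I_p I_q}` and is otherwise
independent of `I_p, I_q`; as `X` is symmetric it is invariant under the transposition `(p q)` and
dies under the antisymmetrizer. The one coming from `δ_{jk}` becomes `H_p X_{p+1} ⋯ X_{r-1}` after
the transposition `(p q)`, since the entries of `X` and `H` commute; the transposition costs a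
sign, so each of the `r - 1 - p` exchanges contributes one copy of the correction `H_p` of `F_p`.
-/

namespace Stmt4

open Matrix

/-- The permutation operator `P^σ` on `(ℂ^n)^{⊗ r}`, as a matrix over `A`. -/
def Pmat (A : Type*) [Ring A] {n r : ℕ} (σ : Equiv.Perm (Fin r)) :
    Matrix (Fin r → Fin n) (Fin r → Fin n) A :=
  Matrix.of fun I J => if I ∘ σ = J then 1 else 0

/-- The normalized antisymmetrizer `A_r = (1/r!) Σ_σ sgn(σ) P^σ`. -/
noncomputable def Amat (A : Type*) [Ring A] [Algebra ℂ A] (n r : ℕ) :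
    Matrix (Fin r → Fin n) (Fin r → Fin n) A :=
  ((r.factorial : ℂ))⁻¹ • ∑ σ : Equiv.Perm (Fin r), (Equiv.Perm.sign σ : ℤ) • Pmat A σ

/-- The operator `(Z 1)_1 (Z 2)_2 ⋯ (Z r)_r`, where `(Z k)_k` is the `n × s` matrix
`Z k` acting on the k-th tensor factor; its `(I,K)`-entry is the ordered product
`(Z 1)_{i₁k₁} (Z 2)_{i₂k₂} ⋯ (Z r)_{i_r k_r}`. -/
def chain {A : Type*} [Ring A] {n s r : ℕ} (Z : Fin r → Matrix (Fin n) (Fin s) A) :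
    Matrix (Fin r → Fin n) (Fin r → Fin s) A :=
  Matrix.of fun I K => ((List.finRange r).map (fun t => Z t (I t) (K t))).prod

section SegProd

variable {A : Type*} [Monoid A] {r : ℕ}

/-- The ordered product `f a * f (a + 1) * ⋯ * f (b - 1)`; positions `≥ r` contribute `1`. -/
def segProd (f : Fin r → A) (a b : ℕ) : A :=
  ((List.range' a (b - a)).map fun t => if h : t < r then f ⟨t, h⟩ else 1).prod

@[simp] lemma segProd_self (f : Fin r → A) (a : ℕ) : segProd f a a = 1 := by
  simp [segProd]

lemma segProd_eq_mul_segProd {f : Fin r → A} {t : Fin r} {b : ℕ} (h : (t : ℕ) < b) :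
    segProd f t b = f t * segProd f (t + 1) b := by
  rw [segProd, segProd, show b - t = b - (t + 1) + 1 by omega, List.range'_succ]
  simp

lemma segProd_succ_eq_segProd_mul {f : Fin r → A} {a : ℕ} {t : Fin r} (h : a ≤ t) :
    segProd f a (t + 1) = segProd f a t * f t := by
  rw [segProd, segProd, show (t : ℕ) + 1 - a = t - a + 1 by omega, List.range'_concat]
  simp [show a + (t - a) = t by omega]

lemma segProd_mul_segProd {f : Fin r → A} {a b c : ℕ} (hab : a ≤ b) (hbc : b ≤ c) :
    segProd f a b * segProd f b c = segProd f a c := by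
  rw [segProd, segProd, segProd, ← List.prod_append, ← List.map_append,
    show c - a = (b - a) + (c - b) by omega, ← List.range'_append_1,
    show a + (b - a) = b by omega]

lemma segProd_congr {f g : Fin r → A} {a b : ℕ}
    (h : ∀ t : Fin r, a ≤ t → (t : ℕ) < b → f t = g t) : segProd f a b = segProd g a b := by
  refine congrArg List.prod (List.map_congr_left fun t ht => ?_)
  rw [List.mem_range'_1] at ht
  split_ifs with htr
  · exact h _ ht.1 (show t < b by omega)
  · rfl

lemma Commute.segProd_right {c : A} {f : Fin r → A} (h : ∀ t, Commute c (f t)) (a b : ℕ) :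
    Commute c (segProd f a b) := by
  refine Commute.list_prod_right _ _ fun x hx => ?_
  obtain ⟨t, -, rfl⟩ := List.mem_map.mp hx
  split_ifs
  exacts [h _, Commute.one_right c]

lemma segProd_eq_zero {M₀ : Type*} [MonoidWithZero M₀] {f : Fin r → M₀} {a b : ℕ} {t : Fin r}
    (ha : a ≤ t) (hb : (t : ℕ) < b) (ht : f t = 0) : segProd f a b = 0 := by
  refine List.prod_eq_zero (List.mem_map.mpr ⟨t, List.mem_range'_1.mpr ⟨ha, by omega⟩, ?_⟩)
  simpa using ht

lemma chain_apply {R : Type*} [Ring R] {n s : ℕ} (Z : Fin r → Matrix (Fin n) (Fin s) R)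
    (I : Fin r → Fin n) (K : Fin r → Fin s) :
    chain Z I K = segProd (fun t => Z t (I t) (K t)) 0 r := by
  rw [chain, of_apply, segProd, Nat.sub_zero, ← List.range_eq_range',
    ← List.map_coe_finRange_eq_range, List.map_map]
  congr 1
  refine List.map_congr_left fun t _ => ?_
  simp

lemma segProd_update_of_lt {β : Type*} (g : Fin r → β → A) {J : Fin r → β} {P : Fin r}
    {a : ℕ} (h : (P : ℕ) < a) (b : ℕ) (v : β) :
    segProd (fun t => g t (Function.update J P v t)) a b = segProd (fun t => g t (J t)) a b :=
  segProd_congr fun t ht _ => by rw [Function.update_of_ne (by omega)]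

lemma segProd_comp_swap {β : Type*} (g : Fin r → β → A) {I : Fin r → β} {P Q : Fin r}
    {a b : ℕ} (hP : (P : ℕ) < a) (hQ : (Q : ℕ) < a ∨ b ≤ Q) :
    segProd (fun t => g t (I (Equiv.swap P Q t))) a b = segProd (fun t => g t (I t)) a b :=
  segProd_congr fun t ht ht' => by rw [Equiv.swap_apply_of_ne_of_ne (by omega) (by omega)]

end SegProd

section Alternation

variable {α M : Type*} [AddCommGroup M] {r : ℕ}

def alt : ((Fin r → α) → M) →+ ((Fin r → α) → M) where
  toFun T I := ∑ σ : Equiv.Perm (Fin r), (Equiv.Perm.sign σ : ℤ) • T (I ∘ σ)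
  map_zero' := by ext; simp
  map_add' T T' := by ext; simp [Finset.sum_add_distrib]

lemma alt_apply (T : (Fin r → α) → M) (I : Fin r → α) :
    alt T I = ∑ σ : Equiv.Perm (Fin r), (Equiv.Perm.sign σ : ℤ) • T (I ∘ σ) := rfl

lemma sign_mul_swap_smul {p q : Fin r} (hpq : p ≠ q) (σ : Equiv.Perm (Fin r)) (x : M) :
    (Equiv.Perm.sign (σ * Equiv.swap p q) : ℤ) • x = -((Equiv.Perm.sign σ : ℤ) • x) := by
  simp [Equiv.Perm.sign_mul, Equiv.Perm.sign_swap hpq]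

lemma alt_comp_swap {p q : Fin r} (hpq : p ≠ q) (T : (Fin r → α) → M) :
    alt (fun I => T (I ∘ Equiv.swap p q)) = -alt T := by
  ext I
  simp only [alt_apply, Pi.neg_apply, ← Finset.sum_neg_distrib]
  refine Fintype.sum_equiv (Equiv.mulRight (Equiv.swap p q)) _ _ fun σ => ?_
  rw [Equiv.coe_mulRight, sign_mul_swap_smul hpq, Equiv.Perm.coe_mul, Function.comp_assoc,
    neg_neg]

lemma alt_eq_zero_of_comp_swap {p q : Fin r} (hpq : p ≠ q) {T : (Fin r → α) → M}
    (hT : ∀ I, T (I ∘ Equiv.swap p q) = T I) : alt T = 0 := by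
  ext I
  refine Finset.sum_ninvolution (· * Equiv.swap p q) (fun σ => ?_) (fun σ _ => ?_)
    (fun _ => Finset.mem_univ _) (fun σ => by simp [mul_assoc])
  · rw [sign_mul_swap_smul hpq, Equiv.Perm.coe_mul, ← Function.comp_assoc, hT, add_neg_cancel]
  · simpa [Equiv.swap_eq_one_iff] using hpq

end Alternation

lemma Amat_mul_apply {A : Type*} [Ring A] [Algebra ℂ A] {n r s : ℕ}
    (M : Matrix (Fin r → Fin n) (Fin r → Fin s) A) (I : Fin r → Fin n) (K : Fin r → Fin s) :
    (Amat A n r * M) I K = ((r.factorial : ℂ))⁻¹ • alt (fun I => M I K) I := by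
  simp only [Amat, Matrix.smul_mul, Matrix.sum_mul, Matrix.smul_apply, Matrix.sum_apply,
    alt_apply]
  congr 1
  refine Finset.sum_congr rfl fun σ _ => ?_
  simp [Pmat, Matrix.mul_apply]

lemma sum_ite_apply_eq_congr {ι α M : Type*} [Fintype ι] [DecidableEq ι] [Fintype α]
    [DecidableEq α] [AddCommMonoid M] {p : ι} {a b : (ι → α) → α} {φ : (ι → α) → M}
    (ha : ∀ J v, a (Function.update J p v) = a J) (hb : ∀ J v, b (Function.update J p v) = b J)
    (hφ : ∀ J v, φ (Function.update J p v) = φ J) :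
    ∑ J, (if J p = a J then φ J else 0) = ∑ J, (if J p = b J then φ J else 0) := by
  let e : Function.Involutive fun J : ι → α =>
      Function.update J p (Equiv.swap (a J) (b J) (J p)) := fun J => by
    simp [ha, hb]
  refine Fintype.sum_equiv e.toPerm _ _ fun J => ?_
  simp [hb, hφ, Equiv.swap_apply_eq_iff]

section Stages

variable {A : Type*} [Ring A] {n m r : ℕ}
  (X : Matrix (Fin n) (Fin n) A) (Y H : Matrix (Fin n) (Fin m) A) (K : Fin r → Fin m)

def mergedPrefix (p : ℕ) (I J : Fin r → Fin n) : A :=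
  segProd (fun t => if J t = I t then (X * Y + (r - 1 - (t : ℕ)) • H) (I t) (K t) else 0) 0 p

/-- The `(I, K)`-entry of `F_0 ⋯ F_{p-1} · X_p ⋯ X_{r-1} · Y_p ⋯ Y_{r-1}`, where
`F_t = X_t Y_t + (r - 1 - t) H_t`; it interpolates between the two sides of the identity. -/
def stage (p : ℕ) (I : Fin r → Fin n) : A :=
  ∑ J, mergedPrefix X Y H K p I J * segProd (fun t => X (I t) (J t)) p r *
    segProd (fun t => Y (J t) (K t)) p r

lemma stage_zero (I : Fin r → Fin n) :
    stage X Y H K 0 I = (chain (fun _ : Fin r => X) * chain (fun _ : Fin r => Y)) I K := by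
  simp [stage, mergedPrefix, Matrix.mul_apply, chain_apply]

lemma stage_last (I : Fin r → Fin n) :
    stage X Y H K r I = chain (fun t : Fin r => X * Y + (r - 1 - (t : ℕ)) • H) I K := by
  rw [stage, Finset.sum_eq_single I, chain_apply]
  · simp [mergedPrefix]
  · intro J _ hJ
    obtain ⟨t, ht⟩ := Function.ne_iff.mp hJ
    rw [mergedPrefix, segProd_eq_zero (t := t) (Nat.zero_le _) t.isLt (if_neg ht), zero_mul,
      zero_mul]
  · simp

lemma mergedPrefix_update {p : ℕ} {P : Fin r} (hP : p ≤ P) (I J : Fin r → Fin n) (v : Fin n) :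
    mergedPrefix X Y H K p I (Function.update J P v) = mergedPrefix X Y H K p I J :=
  segProd_congr fun t _ ht => by rw [Function.update_of_ne (by omega)]

lemma mergedPrefix_comp_swap {p : ℕ} {P Q : Fin r} (hP : p ≤ P) (hQ : p ≤ Q)
    (I J : Fin r → Fin n) :
    mergedPrefix X Y H K p (I ∘ Equiv.swap P Q) J = mergedPrefix X Y H K p I J :=
  segProd_congr fun t _ ht => by
    rw [Function.comp_apply, Equiv.swap_apply_of_ne_of_ne (by omega) (by omega)]

lemma mergedPrefix_succ (p : Fin r) (I J : Fin r → Fin n) :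
    mergedPrefix X Y H K (p + 1) I J = mergedPrefix X Y H K p I J *
      if J p = I p then (X * Y + (r - 1 - (p : ℕ)) • H) (I p) (K p) else 0 :=
  segProd_succ_eq_segProd_mul (Nat.zero_le _)

variable (p : Fin r)

/-- `stage p` with `Y_p` moved to sit just before `X_q`. -/
def movedY (q : ℕ) (I : Fin r → Fin n) : A :=
  ∑ J, mergedPrefix X Y H K p I J *
    (X (I p) (J p) * segProd (fun t => X (I t) (J t)) (p + 1) q * Y (J p) (K p) *
      segProd (fun t => X (I t) (J t)) q r) * segProd (fun t => Y (J t) (K t)) (p + 1) r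

def hTerm (I : Fin r → Fin n) : A :=
  ∑ J, mergedPrefix X Y H K p I J *
    ((if J p = I p then H (I p) (K p) else 0) * segProd (fun t => X (I t) (J t)) (p + 1) r) *
      segProd (fun t => Y (J t) (K t)) (p + 1) r

-- `rowTerm` and `colTerm` come from the `δ_{ik}` and `δ_{jk}` summands of the commutator
-- when `Y_p` passes `X_q`.
def rowTerm (q : Fin r) (I : Fin r → Fin n) : A :=
  ∑ J, mergedPrefix X Y H K p I J *
    (X (I p) (J p) * segProd (fun t => X (I t) (J t)) (p + 1) q *
      (if I q = J p then H (J q) (K p) else 0) * segProd (fun t => X (I t) (J t)) (q + 1) r) *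
      segProd (fun t => Y (J t) (K t)) (p + 1) r

def colTerm (q : Fin r) (I : Fin r → Fin n) : A :=
  ∑ J, mergedPrefix X Y H K p I J *
    (X (I p) (J p) * segProd (fun t => X (I t) (J t)) (p + 1) q *
      (if J q = J p then H (I q) (K p) else 0) * segProd (fun t => X (I t) (J t)) (q + 1) r) *
      segProd (fun t => Y (J t) (K t)) (p + 1) r

lemma stage_eq_movedY : stage X Y H K p = movedY X Y H K p r := by
  ext I
  refine Finset.sum_congr rfl fun J _ => ?_
  rw [segProd_eq_mul_segProd p.isLt,
    segProd_eq_mul_segProd (f := fun t => Y (J t) (K t)) p.isLt, segProd_self, mul_one]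
  simp only [mul_assoc]

lemma movedY_succ
    (hXY : ∀ i j k l, X i j * Y k l - Y k l * X i j
        = -((if i = k then H j l else 0) + (if j = k then H i l else 0)))
    {q : Fin r} (hpq : p < q) :
    movedY X Y H K p (q + 1)
      = movedY X Y H K p q - rowTerm X Y H K p q - colTerm X Y H K p q := by
  ext I
  simp only [movedY, rowTerm, colTerm, Pi.sub_apply, ← Finset.sum_sub_distrib]
  refine Finset.sum_congr rfl fun J _ => ?_
  have hcomm : X (I q) (J q) * Y (J p) (K p) = Y (J p) (K p) * X (I q) (J q)
      - (if I q = J p then H (J q) (K p) else 0) - (if J q = J p then H (I q) (K p) else 0) := by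
    have h := hXY (I q) (J q) (J p) (K p)
    rw [sub_eq_iff_eq_add] at h
    rw [h]
    abel
  rw [segProd_succ_eq_segProd_mul (by omega), segProd_eq_mul_segProd q.isLt]
  simp only [mul_assoc, ← mul_sub]
  rw [← mul_assoc (X (I q) (J q)), hcomm]
  simp only [mul_assoc, sub_mul, mul_sub]

lemma stage_succ_eq :
    stage X Y H K (p + 1)
      = movedY X Y H K p (p + 1) + (r - 1 - (p : ℕ)) • hTerm X Y H K p := by
  ext I
  set L := mergedPrefix X Y H K p I
  set W := fun J : Fin r → Fin n => segProd (fun t => X (I t) (J t)) (p + 1) r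
  set R := fun J : Fin r → Fin n => segProd (fun t => Y (J t) (K t)) (p + 1) r
  set ψ := fun (v : Fin n) (J : Fin r → Fin n) => L J * (X (I p) v * Y v (K p) * W J) * R J
  have hψ (v : Fin n) :
      ∑ J, (if J p = I p then ψ v J else 0) = ∑ J, (if J p = v then ψ v J else 0) := by
    refine sum_ite_apply_eq_congr (fun _ _ => rfl) (fun _ _ => rfl) fun J w => ?_
    simp only [ψ, L, W, R, mergedPrefix_update X Y H K le_rfl,
      segProd_update_of_lt _ (Nat.lt_succ_self p),
      segProd_update_of_lt (fun t j => Y j (K t)) (Nat.lt_succ_self p)]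
  calc stage X Y H K (p + 1) I
      = ∑ J, ∑ v, (if J p = I p then ψ v J else 0)
          + (r - 1 - (p : ℕ)) • hTerm X Y H K p I := by
        simp only [stage, hTerm, Finset.smul_sum, ← Finset.sum_add_distrib]
        refine Finset.sum_congr rfl fun J _ => ?_
        rw [mergedPrefix_succ]
        split_ifs
        · simp only [ψ, L, W, R, Matrix.add_apply, Matrix.smul_apply, Matrix.mul_apply, mul_add,
            add_mul, Finset.mul_sum, Finset.sum_mul, smul_mul_assoc, mul_smul_comm, mul_assoc]
        · simp
    _ = movedY X Y H K p (p + 1) I + (r - 1 - (p : ℕ)) • hTerm X Y H K p I := by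
        rw [Finset.sum_comm]
        simp only [hψ]
        rw [Finset.sum_comm]
        simp [ψ, L, W, R, movedY, mul_assoc]

lemma rowTerm_comp_swap (hXsymm : ∀ i j, X i j = X j i) {q : Fin r} (hpq : p < q)
    (I : Fin r → Fin n) :
    rowTerm X Y H K p q (I ∘ Equiv.swap p q) = rowTerm X Y H K p q I := by
  set φ := fun I J : Fin r → Fin n => mergedPrefix X Y H K p I J *
    (X (I p) (I q) * segProd (fun t => X (I t) (J t)) (p + 1) q * H (J q) (K p) *
      segProd (fun t => X (I t) (J t)) (q + 1) r) * segProd (fun t => Y (J t) (K t)) (p + 1) r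
  have hrow (I' : Fin r → Fin n) :
      rowTerm X Y H K p q I' = ∑ J, if J p = I' q then φ I' J else 0 :=
    Finset.sum_congr rfl fun J _ => by
      by_cases h : J p = I' q
      · simp [φ, h]
      · simp [h, Ne.symm h]
  have hφ_swap (J : Fin r → Fin n) : φ (I ∘ Equiv.swap p q) J = φ I J := by
    simp only [φ, mergedPrefix_comp_swap X Y H K le_rfl hpq.le,
      segProd_comp_swap (fun t i => X i (J t)) (Nat.lt_succ_self p) (Or.inr le_rfl),
      segProd_comp_swap (fun t i => X i (J t)) (Nat.lt_succ_of_lt hpq)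
        (Or.inl (Nat.lt_succ_self q)), Function.comp_apply, Equiv.swap_apply_left,
      Equiv.swap_apply_right, hXsymm (I q)]
  have hφ_update (J : Fin r → Fin n) (v : Fin n) : φ I (Function.update J p v) = φ I J := by
    simp only [φ, mergedPrefix_update X Y H K le_rfl, Function.update_of_ne hpq.ne',
      segProd_update_of_lt _ (Nat.lt_succ_self p), segProd_update_of_lt _ (Nat.lt_succ_of_lt hpq),
      segProd_update_of_lt (fun t j => Y j (K t)) (Nat.lt_succ_self p)]
  calc rowTerm X Y H K p q (I ∘ Equiv.swap p q)
      = ∑ J, if J p = I p then φ I J else 0 := by simp [hrow, hφ_swap]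
    _ = ∑ J, if J p = I q then φ I J else 0 :=
        sum_ite_apply_eq_congr (fun _ _ => rfl) (fun _ _ => rfl) hφ_update
    _ = rowTerm X Y H K p q I := (hrow I).symm

lemma colTerm_comp_swap (hXcomm : ∀ i j k l, Commute (X i j) (X k l))
    (hXH : ∀ i j k l, Commute (X i j) (H k l)) {q : Fin r} (hpq : p < q) (I : Fin r → Fin n) :
    colTerm X Y H K p q (I ∘ Equiv.swap p q) = hTerm X Y H K p I := by
  set φ := fun J : Fin r → Fin n => mergedPrefix X Y H K p I J *
    (X (I q) (J q) * segProd (fun t => X (I t) (J t)) (p + 1) q * H (I p) (K p) *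
      segProd (fun t => X (I t) (J t)) (q + 1) r) * segProd (fun t => Y (J t) (K t)) (p + 1) r
  have hφ_update (J : Fin r → Fin n) (v : Fin n) : φ (Function.update J p v) = φ J := by
    simp only [φ, mergedPrefix_update X Y H K le_rfl, Function.update_of_ne hpq.ne',
      segProd_update_of_lt _ (Nat.lt_succ_self p), segProd_update_of_lt _ (Nat.lt_succ_of_lt hpq),
      segProd_update_of_lt (fun t j => Y j (K t)) (Nat.lt_succ_self p)]
  calc colTerm X Y H K p q (I ∘ Equiv.swap p q)
      = ∑ J, if J p = J q then φ J else 0 :=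
        Finset.sum_congr rfl fun J _ => by
          by_cases h : J p = J q
          · simp [φ, h, mergedPrefix_comp_swap X Y H K le_rfl hpq.le,
              segProd_comp_swap (fun t i => X i (J t)) (Nat.lt_succ_self p) (Or.inr le_rfl),
              segProd_comp_swap (fun t i => X i (J t)) (Nat.lt_succ_of_lt hpq)
                (Or.inl (Nat.lt_succ_self q))]
          · simp [h, Ne.symm h]
    _ = ∑ J, if J p = I p then φ J else 0 :=
        sum_ite_apply_eq_congr (fun J v => Function.update_of_ne hpq.ne' v J) (fun _ _ => rfl)
          hφ_update
    _ = hTerm X Y H K p I :=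
        Finset.sum_congr rfl fun J _ => by
          split_ifs with h
          · have hXU : Commute (X (I q) (J q)) (segProd (fun t => X (I t) (J t)) (p + 1) q) :=
              Commute.segProd_right (fun _ => hXcomm _ _ _ _) _ _
            have hHU : Commute (H (I p) (K p)) (segProd (fun t => X (I t) (J t)) (p + 1) q) :=
              Commute.segProd_right (fun _ => (hXH _ _ _ _).symm) _ _
            have hXUH : X (I q) (J q) * segProd (fun t => X (I t) (J t)) (p + 1) q * H (I p) (K p)
                = H (I p) (K p) * segProd (fun t => X (I t) (J t)) (p + 1) q * X (I q) (J q) := by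
              rw [mul_assoc, ← hHU.eq, ← mul_assoc, (hXH _ _ _ _).eq, mul_assoc, hXU.eq,
                mul_assoc]
            rw [← segProd_mul_segProd (show (p : ℕ) + 1 ≤ q by omega) q.isLt.le,
              segProd_eq_mul_segProd q.isLt]
            simp only [φ]
            rw [hXUH]
            simp only [mul_assoc]
          · simp

lemma alt_movedY_succ (hXsymm : ∀ i j, X i j = X j i)
    (hXcomm : ∀ i j k l, Commute (X i j) (X k l))
    (hXY : ∀ i j k l, X i j * Y k l - Y k l * X i j
        = -((if i = k then H j l else 0) + (if j = k then H i l else 0)))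
    (hXH : ∀ i j k l, Commute (X i j) (H k l)) {q : Fin r} (hpq : p < q) :
    alt (movedY X Y H K p (q + 1)) = alt (movedY X Y H K p q) + alt (hTerm X Y H K p) := by
  have hcol : colTerm X Y H K p q = fun I => hTerm X Y H K p (I ∘ Equiv.swap p q) :=
    funext fun I => by
      rw [← colTerm_comp_swap X Y H K p hXcomm hXH hpq]
      congr 1
      ext t
      simp
  rw [movedY_succ X Y H K p hXY hpq, map_sub, map_sub,
    alt_eq_zero_of_comp_swap hpq.ne (rowTerm_comp_swap X Y H K p hXsymm hpq), hcol,
    alt_comp_swap hpq.ne, sub_zero, sub_neg_eq_add]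

lemma alt_movedY (hXsymm : ∀ i j, X i j = X j i)
    (hXcomm : ∀ i j k l, Commute (X i j) (X k l))
    (hXY : ∀ i j k l, X i j * Y k l - Y k l * X i j
        = -((if i = k then H j l else 0) + (if j = k then H i l else 0)))
    (hXH : ∀ i j k l, Commute (X i j) (H k l)) {q : ℕ} (hpq : (p : ℕ) < q) (hqr : q ≤ r) :
    alt (movedY X Y H K p q) + (r - q) • alt (hTerm X Y H K p) = alt (movedY X Y H K p r) := by
  induction hqr using Nat.decreasingInduction with
  | self => simp
  | of_succ q hq ih =>
    rw [← ih (by omega), show r - q = r - (q + 1) + 1 by omega, succ_nsmul,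
      alt_movedY_succ X Y H K p hXsymm hXcomm hXY hXH (q := ⟨q, hq⟩) hpq]
    abel

lemma alt_stage_succ (hXsymm : ∀ i j, X i j = X j i)
    (hXcomm : ∀ i j k l, Commute (X i j) (X k l))
    (hXY : ∀ i j k l, X i j * Y k l - Y k l * X i j
        = -((if i = k then H j l else 0) + (if j = k then H i l else 0)))
    (hXH : ∀ i j k l, Commute (X i j) (H k l)) :
    alt (stage X Y H K (p + 1)) = alt (stage X Y H K p) := by
  rw [stage_succ_eq, map_add, map_nsmul, stage_eq_movedY,
    show r - 1 - (p : ℕ) = r - (p + 1) by omega,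
    alt_movedY X Y H K p hXsymm hXcomm hXY hXH (by omega) p.isLt]

end Stages

theorem turnbull_symmetric_operator
    {A : Type*} [Ring A] [Algebra ℂ A] (n m r : ℕ)
    (X : Matrix (Fin n) (Fin n) A) (Y H : Matrix (Fin n) (Fin m) A)
    (hXsymm : ∀ i j, X i j = X j i)
    (hXcomm : ∀ i j k l, Commute (X i j) (X k l))
    (hXY : ∀ i j k l, X i j * Y k l - Y k l * X i j
        = -((if i = k then H j l else 0) + (if j = k then H i l else 0)))
    (hXH : ∀ i j k l, Commute (X i j) (H k l)) :
    Amat A n r * chain (fun k : Fin r => X * Y + (r - 1 - (k : ℕ)) • H)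
      = Amat A n r * (chain (fun _ : Fin r => X) * chain (fun _ : Fin r => Y)) := by
  ext I K
  have h_alt_stage : ∀ p ≤ r, alt (stage X Y H K p) = alt (stage X Y H K 0) := by
    intro p hp
    induction p with
    | zero => rfl
    | succ p ih =>
      rw [← ih (by omega)]
      exact alt_stage_succ X Y H K ⟨p, hp⟩ hXsymm hXcomm hXY hXH
  rw [Amat_mul_apply, Amat_mul_apply]
  simp only [← stage_last X Y H K, ← stage_zero X Y H K]
  rw [h_alt_stage r le_rfl]

end Stmt4
end

section
/- Let A be a unital associative ℂ-algebra, X an n×n antisymmetric matrix over A whose entries pairwise commute, Y an n×m matrix over A, and H an n×m matrix over A such that [X_{ij}, Y_{kl}] = −(δ_{ik} H_{jl} − δ_{jk} H_{il}) for all 1 ≤ i,j,k ≤ n, 1 ≤ l ≤ m, and every entry of X commutes with every entry of H (automatic when n ≥ 4). Then for every r, S_r · (X_1Y_1 + (r−1)H_1)(X_2Y_2 + (r−2)H_2) ⋯ (X_{r−1}Y_{r−1} + H_{r−1})(X_rY_r) = S_r · X_1⋯X_r Y_1⋯Y_r as A-linear operators (ℂ^m)^{⊗r} → (ℂ^n)^{⊗r}.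 -/
/-!
Entrywise, `S_r * M` at `(I, K)` is `(r!)⁻¹ • ∑ σ, M (I ∘ σ) K`, so it suffices to compare
the row-symmetrized entries of the two sides, by induction on `r`, peeling off the first
tensor factor. In `X₁⋯X_r Y₁⋯Y_r`, move `Y₁` to the left past `X₂⋯X_r`. By the Leibniz rule
every commutator `[X_{1+s}, Y₁]` contributes two `H`-terms. Under the transposition of rows
`1` and `1+s`, one of them becomes `H₁ X₂⋯X_r Y₂⋯Y_r`. The other changes sign, because `X`
is antisymmetric, so it vanishes after symmetrization. This produces the factor
`X₁Y₁ + (r-1)H₁`, and the induction hypothesis takes care of the remaining factors.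
-/

namespace Stmt6

open Matrix

/-- The permutation operator `P^σ` on `(ℂ^n)^{⊗ r}`, as a matrix over `A`. -/
def Pmat (A : Type*) [Ring A] {n r : ℕ} (σ : Equiv.Perm (Fin r)) :
    Matrix (Fin r → Fin n) (Fin r → Fin n) A :=
  Matrix.of fun I J => if I ∘ σ = J then 1 else 0

/-- The normalized symmetrizer `S_r = (1/r!) Σ_σ P^σ`. -/
noncomputable def Smat (A : Type*) [Ring A] [Algebra ℂ A] (n r : ℕ) :
    Matrix (Fin r → Fin n) (Fin r → Fin n) A :=
  ((r.factorial : ℂ))⁻¹ • ∑ σ : Equiv.Perm (Fin r), Pmat A σ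

/-- The operator `(Z 1)_1 (Z 2)_2 ⋯ (Z r)_r`, where `(Z k)_k` is the `n × s` matrix
`Z k` acting on the k-th tensor factor; its `(I,K)`-entry is the ordered product
`(Z 1)_{i₁k₁} (Z 2)_{i₂k₂} ⋯ (Z r)_{i_r k_r}`. -/
def chain {A : Type*} [Ring A] {n s r : ℕ} (Z : Fin r → Matrix (Fin n) (Fin s) A) :
    Matrix (Fin r → Fin n) (Fin r → Fin s) A :=
  Matrix.of fun I K => ((List.finRange r).map (fun t => Z t (I t) (K t))).prod

open Equiv Function

section ListProduct
variable {r : ℕ}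

theorem prod_ofFn_update {M : Type*} [Monoid M] (f : Fin r → M) (s : Fin r) (b : M) :
    (List.ofFn (update f s b)).prod =
      ((List.ofFn f).take s).prod * b * ((List.ofFn f).drop (s + 1)).prod := by
  have hset : List.ofFn (update f s b) = (List.ofFn f).set s b := by
    refine List.ext_getElem (by simp) fun i _ _ => ?_
    simp [List.getElem_set, update_apply, Fin.ext_iff, eq_comm]
  rw [hset, List.prod_set, if_pos (by simp)]

theorem mul_prod_ofFn_update {M : Type*} [Monoid M] {f : Fin r → M} {c : M}
    (hc : ∀ t, Commute c (f t)) (s : Fin r) (b : M) :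
    c * (List.ofFn (update f s b)).prod = (List.ofFn (update f s (c * b))).prod := by
  have hcomm : ∀ l ⊆ List.ofFn f, Commute c l.prod := fun l hl =>
    Commute.list_prod_right _ _ fun x hx => by
      obtain ⟨t, rfl⟩ := List.mem_ofFn.mp (hl hx)
      exact hc t
  rw [prod_ofFn_update, prod_ofFn_update, ← mul_assoc, ← mul_assoc, ← mul_assoc,
    (hcomm _ (List.take_subset _ _)).eq]

variable {R : Type*} [Ring R]

theorem prod_ofFn_update_sub (f : Fin r → R) (s : Fin r) (b c : R) :
    (List.ofFn (update f s (b - c))).prod =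
      (List.ofFn (update f s b)).prod - (List.ofFn (update f s c)).prod := by
  simp only [prod_ofFn_update, mul_sub, sub_mul]

theorem prod_ofFn_update_ite_zero (f : Fin r → R) (s : Fin r) (p : Prop) [Decidable p] (b : R) :
    (List.ofFn (update f s (if p then b else 0))).prod =
      if p then (List.ofFn (update f s b)).prod else 0 := by
  split_ifs <;> simp [prod_ofFn_update]

theorem prod_ofFn_mul_sub_mul_prod_ofFn (f : Fin r → R) (y : R) :
    (List.ofFn f).prod * y - y * (List.ofFn f).prod =
      ∑ s, (List.ofFn (update f s (f s * y - y * f s))).prod := by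
  induction r with
  | zero => simp
  | succ r ih =>
    have hzero : List.ofFn (update f 0 (f 0 * y - y * f 0)) =
        (f 0 * y - y * f 0) :: List.ofFn fun i => f i.succ := by
      simp [List.ofFn_succ]
    have hsucc : ∀ s c, List.ofFn (update f s.succ c) =
        f 0 :: List.ofFn (update (fun i => f i.succ) s c) := fun s c => by
      rw [List.ofFn_succ, update_of_ne (Fin.succ_ne_zero s).symm]
      congr 2
      exact update_comp_eq_of_injective f (Fin.succ_injective r) s c
    rw [Fin.sum_univ_succ, hzero, List.prod_cons]
    simp only [hsucc, List.prod_cons]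
    rw [← Finset.mul_sum, ← ih, List.ofFn_succ, List.prod_cons]
    noncomm_ring

end ListProduct

section PermutationSums
variable {α M : Type*} {r : ℕ}

theorem sum_perm_comp_eq_of_comp_eq [AddCommMonoid M] {G G' : (Fin r → α) → M}
    (τ : Perm (Fin r)) (h : ∀ I, G (I ∘ τ) = G' I) (I : Fin r → α) :
    ∑ σ : Perm (Fin r), G (I ∘ σ) = ∑ σ : Perm (Fin r), G' (I ∘ σ) := by
  rw [← Equiv.sum_comp (Equiv.mulRight τ)]
  simp [Perm.coe_mul, ← Function.comp_assoc, h]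

theorem sum_perm_comp_eq_zero_of_comp_eq_neg [AddCommGroup M] [IsAddTorsionFree M]
    {G : (Fin r → α) → M} (τ : Perm (Fin r)) (h : ∀ I, G (I ∘ τ) = -G I)
    (I : Fin r → α) :
    ∑ σ : Perm (Fin r), G (I ∘ σ) = 0 := by
  have := sum_perm_comp_eq_of_comp_eq τ h I
  rwa [Finset.sum_neg_distrib, self_eq_neg] at this

theorem sum_perm_comp_eq_sum_sum [AddCommMonoid M] (g : α → (Fin r → α) → M)
    (I : Fin (r + 1) → α) :
    ∑ σ : Perm (Fin (r + 1)), g ((I ∘ σ) 0) (Fin.tail (I ∘ σ)) =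
      ∑ p, ∑ τ : Perm (Fin r), g (I p) (Fin.tail (I ∘ swap 0 p) ∘ τ) := by
  rw [← Equiv.sum_comp Perm.decomposeFin.symm, Fintype.sum_prod_type]
  refine Finset.sum_congr rfl fun p _ => Finset.sum_congr rfl fun τ _ => ?_
  congr 1
  · simp [Perm.decomposeFin_symm_apply_zero]
  · funext t
    simp [Fin.tail, Perm.decomposeFin_symm_apply_succ]

theorem sum_perm_mul_tail_congr [NonUnitalNonAssocSemiring M] (h : α → M)
    {f g : (Fin r → α) → M}
    (hfg : ∀ I, ∑ τ : Perm (Fin r), f (I ∘ τ) = ∑ τ : Perm (Fin r), g (I ∘ τ))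
    (I : Fin (r + 1) → α) :
    ∑ σ : Perm (Fin (r + 1)), h ((I ∘ σ) 0) * f (Fin.tail (I ∘ σ)) =
      ∑ σ : Perm (Fin (r + 1)), h ((I ∘ σ) 0) * g (Fin.tail (I ∘ σ)) := by
  rw [sum_perm_comp_eq_sum_sum (fun a J => h a * f J),
    sum_perm_comp_eq_sum_sum (fun a J => h a * g J)]
  simp only [← Finset.mul_sum, hfg]

theorem tail_comp_swap_zero_succ (I : Fin (r + 1) → α) (s : Fin r) :
    Fin.tail (I ∘ swap 0 s.succ) = update (Fin.tail I) s (I 0) := by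
  funext t
  rcases eq_or_ne t s with rfl | h
  · simp [Fin.tail]
  · simp [Fin.tail, h, swap_apply_of_ne_of_ne, Fin.succ_ne_zero]

end PermutationSums

section Chain
variable {A : Type*} [Ring A] {n p q r : ℕ}

theorem chain_apply (Z : Fin r → Matrix (Fin n) (Fin p) A) (I : Fin r → Fin n)
    (K : Fin r → Fin p) : chain Z I K = (List.ofFn fun t => Z t (I t) (K t)).prod := by
  rw [chain, of_apply, List.ofFn_eq_map]

theorem chain_succ_apply (Z : Fin (r + 1) → Matrix (Fin n) (Fin p) A)
    (I : Fin (r + 1) → Fin n) (K : Fin (r + 1) → Fin p) :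
    chain Z I K = Z 0 (I 0) (K 0) * chain (fun t => Z t.succ) (Fin.tail I) (Fin.tail K) := by
  simp only [chain_apply, List.ofFn_succ, List.prod_cons, Fin.tail]

theorem chain_mul_chain_succ_apply (Z : Fin (r + 1) → Matrix (Fin n) (Fin p) A)
    (W : Fin (r + 1) → Matrix (Fin p) (Fin q) A) (I : Fin (r + 1) → Fin n)
    (K : Fin (r + 1) → Fin q) :
    (chain Z * chain W) I K = ∑ j, ∑ J,
      Z 0 (I 0) j * chain (fun t => Z t.succ) (Fin.tail I) J *
        (W 0 j (K 0) * chain (fun t => W t.succ) J (Fin.tail K)) := by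
  rw [mul_apply, ← Equiv.sum_comp (Fin.consEquiv fun _ => Fin p), Fintype.sum_prod_type]
  simp [chain_succ_apply, Fin.consEquiv]

theorem chain_update_apply (Z : Fin r → Matrix (Fin n) (Fin p) A) (s : Fin r)
    (M : Matrix (Fin n) (Fin p) A) (I : Fin r → Fin n) (K : Fin r → Fin p) :
    chain (update Z s M) I K =
      (List.ofFn (update (fun t => Z t (I t) (K t)) s (M (I s) (K s)))).prod := by
  rw [chain_apply]
  congr
  funext t
  rcases eq_or_ne t s with rfl | h <;> simp [*]

theorem chain_update_apply_of_rows_eq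
    {Z : Fin r → Matrix (Fin n) (Fin p) A} {s : Fin r} (hZ : ∀ i i' j, Z s i j = Z s i' j)
    (I : Fin r → Fin n) (a : Fin n) (K : Fin r → Fin p) :
    chain Z (update I s a) K = chain Z I K := by
  simp only [chain_apply]
  congr
  funext t
  rcases eq_or_ne t s with rfl | h
  · simp [hZ _ (I t)]
  · simp [h]

end Chain

theorem Pmat_mul_apply {A : Type*} [Ring A] {n r : ℕ} {κ : Type*} [Fintype κ]
    (σ : Perm (Fin r)) (M : Matrix (Fin r → Fin n) κ A) (I : Fin r → Fin n) (k : κ) :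
    (Pmat A (n := n) σ * M) I k = M (I ∘ σ) k := by
  simp [mul_apply, Pmat]

theorem Smat_mul_apply {A : Type*} [Ring A] [Algebra ℂ A] {n r : ℕ} {κ : Type*} [Fintype κ]
    (M : Matrix (Fin r → Fin n) κ A) (I : Fin r → Fin n) (k : κ) :
    (Smat A n r * M) I k = (r.factorial : ℂ)⁻¹ • ∑ σ : Perm (Fin r), M (I ∘ σ) k := by
  simp [Smat, Matrix.smul_mul, Matrix.sum_mul, Matrix.sum_apply, Pmat_mul_apply]

section Turnbull
variable {A : Type*} [Ring A] {n m : ℕ}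
variable (X : Matrix (Fin n) (Fin n) A) (Y H : Matrix (Fin n) (Fin m) A)

def xyChain (r : ℕ) : Matrix (Fin r → Fin n) (Fin r → Fin m) A :=
  chain (fun _ : Fin r => X) * chain (fun _ : Fin r => Y)

def shiftedChain (r : ℕ) : Matrix (Fin r → Fin n) (Fin r → Fin m) A :=
  chain (fun k : Fin r => X * Y + (r - 1 - (k : ℕ)) • H)

/-- Collects the terms `δ_{I s, j} H_{J s, k}` of the commutators `[X_{I s, J s}, Y_{j k}]`;
they cancel under row symmetrization. -/
def xyChainColumn {r : ℕ} (s : Fin r) (k : Fin m) :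
    Matrix (Fin r → Fin n) (Fin r → Fin m) A :=
  chain (update (fun _ => X) s (replicateRow (Fin n) (H · k))) * chain fun _ : Fin r => Y

variable {X Y H}

theorem sum_mul_prod_ofFn_update_commutator
    (hXcomm : ∀ i j k l, Commute (X i j) (X k l))
    (hXY : ∀ i j k l, X i j * Y k l - Y k l * X i j
        = -((if i = k then H j l else 0) - (if j = k then H i l else 0)))
    (hXH : ∀ i j k l, Commute (X i j) (H k l)) {r : ℕ}
    (a : Fin n) (k : Fin m) (s : Fin r) (I J : Fin r → Fin n) :
    ∑ j, X a j * (List.ofFn (update (fun t => X (I t) (J t)) s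
        (X (I s) (J s) * Y j k - Y j k * X (I s) (J s)))).prod =
      H (I s) k * chain (fun _ => X) (update I s a) J -
        X a (I s) * chain (update (fun _ => X) s (replicateRow (Fin n) (H · k))) I J := by
  set f := fun t => X (I t) (J t)
  have hX : chain (fun _ => X) (update I s a) J = (List.ofFn (update f s (X a (J s)))).prod := by
    rw [chain_apply]
    congr
    funext t
    rcases eq_or_ne t s with rfl | h <;> simp [f, *]
  have hH : H (I s) k * (List.ofFn (update f s (X a (J s)))).prod =
      X a (J s) * (List.ofFn (update f s (H (I s) k))).prod := by
    rw [mul_prod_ofFn_update (fun t => hXcomm a (J s) _ _),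
      mul_prod_ofFn_update (fun t => (hXH _ _ _ _).symm), (hXH a (J s) (I s) k).eq]
  simp only [hXY, neg_sub, prod_ofFn_update_sub, prod_ofFn_update_ite_zero, mul_sub, mul_ite,
    mul_zero, Finset.sum_sub_distrib, Finset.sum_ite_eq, Finset.mem_univ, if_true,
    chain_update_apply, replicateRow_apply, hX, hH]
  rfl

theorem xyChain_succ_apply
    (hXcomm : ∀ i j k l, Commute (X i j) (X k l))
    (hXY : ∀ i j k l, X i j * Y k l - Y k l * X i j
        = -((if i = k then H j l else 0) - (if j = k then H i l else 0)))
    (hXH : ∀ i j k l, Commute (X i j) (H k l)) {r : ℕ}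
    (I : Fin (r + 1) → Fin n) (K : Fin (r + 1) → Fin m) :
    xyChain X Y (r + 1) I K =
      (X * Y) (I 0) (K 0) * xyChain X Y r (Fin.tail I) (Fin.tail K) +
        ∑ s, (H (Fin.tail I s) (K 0) * xyChain X Y r (update (Fin.tail I) s (I 0)) (Fin.tail K) -
          X (I 0) (Fin.tail I s) * xyChainColumn X Y H s (K 0) (Fin.tail I) (Fin.tail K)) := by
  have hleibniz : ∀ j (J : Fin r → Fin n), chain (fun _ => X) (Fin.tail I) J * Y j (K 0) =
      Y j (K 0) * chain (fun _ => X) (Fin.tail I) J +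
        ∑ s, (List.ofFn (update (fun t => X (Fin.tail I t) (J t)) s
          (X (Fin.tail I s) (J s) * Y j (K 0) - Y j (K 0) * X (Fin.tail I s) (J s)))).prod :=
    fun j J => by rw [← prod_ofFn_mul_sub_mul_prod_ofFn, chain_apply, add_sub_cancel]
  calc xyChain X Y (r + 1) I K
      = ∑ j, ∑ J : Fin r → Fin n,
          X (I 0) j * (chain (fun _ => X) (Fin.tail I) J * Y j (K 0)) *
            chain (fun _ => Y) J (Fin.tail K) := by
        simp only [xyChain, chain_mul_chain_succ_apply, mul_assoc]
    _ = ∑ J : Fin r → Fin n, (∑ j, X (I 0) j * Y j (K 0)) *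
          (chain (fun _ => X) (Fin.tail I) J * chain (fun _ => Y) J (Fin.tail K)) +
        ∑ s, ∑ J : Fin r → Fin n, (∑ j, X (I 0) j *
          (List.ofFn (update (fun t => X (Fin.tail I t) (J t)) s
            (X (Fin.tail I s) (J s) * Y j (K 0) - Y j (K 0) * X (Fin.tail I s) (J s)))).prod) *
          chain (fun _ => Y) J (Fin.tail K) := by
        simp only [hleibniz, mul_add, add_mul, Finset.mul_sum, Finset.sum_mul,
          Finset.sum_add_distrib, mul_assoc]
        congr 1
        · exact Finset.sum_comm
        · rw [Finset.sum_comm]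
          refine (Finset.sum_congr rfl fun J _ => Finset.sum_comm).trans Finset.sum_comm
    _ = _ := by
        simp only [sum_mul_prod_ofFn_update_commutator hXcomm hXY hXH, sub_mul, mul_assoc,
          Finset.sum_sub_distrib, ← Finset.mul_sum, ← mul_apply]
        rfl

theorem xyChainColumn_update_apply {r : ℕ} (s : Fin r) (k : Fin m) (I : Fin r → Fin n)
    (a : Fin n) (K : Fin r → Fin m) :
    xyChainColumn X Y H s k (update I s a) K = xyChainColumn X Y H s k I K := by
  simp only [xyChainColumn, mul_apply]
  refine Finset.sum_congr rfl fun J _ => ?_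
  rw [chain_update_apply_of_rows_eq]
  simp

theorem sum_perm_mul_xyChain_update_tail {r : ℕ} (s : Fin r) (k : Fin m)
    (I : Fin (r + 1) → Fin n) (K : Fin r → Fin m) :
    ∑ σ : Perm (Fin (r + 1)), H (Fin.tail (I ∘ σ) s) k *
        xyChain X Y r (update (Fin.tail (I ∘ σ)) s ((I ∘ σ) 0)) K =
      ∑ σ : Perm (Fin (r + 1)), H ((I ∘ σ) 0) k * xyChain X Y r (Fin.tail (I ∘ σ)) K := by
  refine sum_perm_comp_eq_of_comp_eq (swap 0 s.succ)
    (G := fun I' => H (Fin.tail I' s) k * xyChain X Y r (update (Fin.tail I') s (I' 0)) K)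
    (G' := fun I' => H (I' 0) k * xyChain X Y r (Fin.tail I') K) (fun I' => ?_) I
  rw [tail_comp_swap_zero_succ, update_self, update_idem, Function.comp_apply, swap_apply_left]
  exact congrArg (H (I' 0) k * xyChain X Y r · K) (update_eq_self s _)

theorem sum_perm_mul_xyChainColumn_eq_zero [IsAddTorsionFree A]
    (hXanti : ∀ i j, X i j = - X j i) {r : ℕ} (s : Fin r) (k : Fin m)
    (I : Fin (r + 1) → Fin n) (K : Fin r → Fin m) :
    ∑ σ : Perm (Fin (r + 1)),
      X ((I ∘ σ) 0) (Fin.tail (I ∘ σ) s) *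
        xyChainColumn X Y H s k (Fin.tail (I ∘ σ)) K = 0 := by
  refine sum_perm_comp_eq_zero_of_comp_eq_neg (swap 0 s.succ)
    (G := fun I' => X (I' 0) (Fin.tail I' s) * xyChainColumn X Y H s k (Fin.tail I') K)
    (fun I' => ?_) I
  rw [tail_comp_swap_zero_succ, update_self, xyChainColumn_update_apply, hXanti, neg_mul,
    Function.comp_apply, swap_apply_left]
  rfl

theorem sum_perm_xyChain_succ [IsAddTorsionFree A]
    (hXanti : ∀ i j, X i j = - X j i)
    (hXcomm : ∀ i j k l, Commute (X i j) (X k l))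
    (hXY : ∀ i j k l, X i j * Y k l - Y k l * X i j
        = -((if i = k then H j l else 0) - (if j = k then H i l else 0)))
    (hXH : ∀ i j k l, Commute (X i j) (H k l)) {r : ℕ}
    (I : Fin (r + 1) → Fin n) (K : Fin (r + 1) → Fin m) :
    ∑ σ : Perm (Fin (r + 1)), xyChain X Y (r + 1) (I ∘ σ) K =
      ∑ σ : Perm (Fin (r + 1)),
        (X * Y + r • H) ((I ∘ σ) 0) (K 0) *
          xyChain X Y r (Fin.tail (I ∘ σ)) (Fin.tail K) := by
  have hcol : ∑ σ : Perm (Fin (r + 1)), ∑ s : Fin r, H (Fin.tail (I ∘ σ) s) (K 0) *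
        xyChain X Y r (update (Fin.tail (I ∘ σ)) s ((I ∘ σ) 0)) (Fin.tail K) =
      r • ∑ σ : Perm (Fin (r + 1)), H ((I ∘ σ) 0) (K 0) *
        xyChain X Y r (Fin.tail (I ∘ σ)) (Fin.tail K) := by
    rw [Finset.sum_comm]
    simp only [sum_perm_mul_xyChain_update_tail, Finset.sum_const, Finset.card_univ,
      Fintype.card_fin]
  have hanti : ∑ σ : Perm (Fin (r + 1)), ∑ s : Fin r,
      X ((I ∘ σ) 0) (Fin.tail (I ∘ σ) s) *
        xyChainColumn X Y H s (K 0) (Fin.tail (I ∘ σ)) (Fin.tail K) = 0 := by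
    rw [Finset.sum_comm]
    exact Finset.sum_eq_zero fun s _ => sum_perm_mul_xyChainColumn_eq_zero hXanti s _ I _
  simp only [xyChain_succ_apply hXcomm hXY hXH, Finset.sum_add_distrib, Finset.sum_sub_distrib,
    hcol, hanti, sub_zero, Matrix.add_apply, Matrix.smul_apply, add_mul, smul_mul_assoc,
    Finset.smul_sum]

theorem shiftedChain_succ_apply {r : ℕ} (I : Fin (r + 1) → Fin n) (K : Fin (r + 1) → Fin m) :
    shiftedChain X Y H (r + 1) I K =
      (X * Y + r • H) (I 0) (K 0) * shiftedChain X Y H r (Fin.tail I) (Fin.tail K) := by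
  rw [shiftedChain, chain_succ_apply]
  congr 4
  funext t
  rw [Fin.val_succ, show r + 1 - 1 - (t + 1) = r - 1 - t by omega]

theorem sum_perm_shiftedChain_eq_sum_perm_xyChain [IsAddTorsionFree A]
    (hXanti : ∀ i j, X i j = - X j i)
    (hXcomm : ∀ i j k l, Commute (X i j) (X k l))
    (hXY : ∀ i j k l, X i j * Y k l - Y k l * X i j
        = -((if i = k then H j l else 0) - (if j = k then H i l else 0)))
    (hXH : ∀ i j k l, Commute (X i j) (H k l))
    (r : ℕ) (I : Fin r → Fin n) (K : Fin r → Fin m) :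
    ∑ σ : Perm (Fin r), shiftedChain X Y H r (I ∘ σ) K =
      ∑ σ : Perm (Fin r), xyChain X Y r (I ∘ σ) K := by
  induction r with
  | zero => simp [shiftedChain, xyChain, chain_apply, mul_apply]
  | succ r ih =>
    simp only [shiftedChain_succ_apply, sum_perm_xyChain_succ hXanti hXcomm hXY hXH]
    exact sum_perm_mul_tail_congr (fun a => (X * Y + r • H) a (K 0))
      (f := fun I' => shiftedChain X Y H r I' (Fin.tail K))
      (g := fun I' => xyChain X Y r I' (Fin.tail K)) (fun I' => ih I' (Fin.tail K)) I

end Turnbull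

theorem turnbull_antisymmetric_operator
    {A : Type*} [Ring A] [Algebra ℂ A] (n m r : ℕ)
    (X : Matrix (Fin n) (Fin n) A) (Y H : Matrix (Fin n) (Fin m) A)
    (hXanti : ∀ i j, X i j = - X j i)
    (hXcomm : ∀ i j k l, Commute (X i j) (X k l))
    (hXY : ∀ i j k l, X i j * Y k l - Y k l * X i j
        = -((if i = k then H j l else 0) - (if j = k then H i l else 0)))
    (hXH : ∀ i j k l, Commute (X i j) (H k l)) :
    Smat A n r * chain (fun k : Fin r => X * Y + (r - 1 - (k : ℕ)) • H)
      = Smat A n r * (chain (fun _ : Fin r => X) * chain (fun _ : Fin r => Y)) := by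
  have : IsAddTorsionFree A := .of_isTorsionFree ℂ A
  ext I K
  rw [Smat_mul_apply, Smat_mul_apply]
  exact congrArg _ (sum_perm_shiftedChain_eq_sum_perm_xyChain hXanti hXcomm hXY hXH r I K)

end Stmt6
end
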